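/- arXiv:1710.03995 — 7 statements merged into one kernel-verified Lean document; each statement's English description precedes it below -/
import Mathlib

section
/- For any n×n complex matrices A and B, the absolute value of the trace of AB is at most the sum over i from 1 to n of σ_i(A)·σ_i(B), where σ_i denotes the i-th largest singular value (von Neumann's trace inequality). -/
open Matrix Finset

/-- The `i`-th largest singular value of an `n × n` complex matrix
(indexed by `i : Fin n`, with `i = 0` the largest). -/
noncomputable def singularValue {n : ℕ} (A : Matrix (Fin n) (Fin n) ℂ) (i : Fin n) : ℝ :=
  Real.sqrt ((((Matrix.isHermitian_conjTranspose_mul_self A)).eigenvalues ∘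
    Tuple.sort ((Matrix.isHermitian_conjTranspose_mul_self A)).eigenvalues) i.rev)

/-- Euclidean norm of the `j`-th column of `Z`. -/
noncomputable def colNorm {n : ℕ} (Z : Matrix (Fin n) (Fin n) ℂ) (j : Fin n) : ℝ :=
  Real.sqrt (∑ k, ‖Z k j‖ ^ 2)

/-- The `i`-th largest column norm of `Z` (decreasingly ordered `c_i(Z)`). -/
noncomputable def colNormSorted {n : ℕ} (Z : Matrix (Fin n) (Fin n) ℂ) (i : Fin n) : ℝ :=
  (colNorm Z ∘ Tuple.sort (colNorm Z)) i.rev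


/-!
Write `A vᵢ = σᵢ uᵢ` and `B xⱼ = τⱼ wⱼ` with orthonormal bases `v, u, x, w` (the `vᵢ` are
eigenvectors of `Aᴴ A`, so the `A vᵢ` are orthogonal of length `σᵢ`). Expanding the trace
in the basis `x` gives `tr (A B) = ∑ᵢⱼ σᵢ τⱼ ⟪vᵢ, wⱼ⟫ ⟪xⱼ, uᵢ⟫`. By AM-GM each product of inner
products is bounded by the average of the entries of the matrices `|⟪vᵢ, wⱼ⟫|²` and `|⟪uᵢ, xⱼ⟫|²`,
which are doubly stochastic because `v, w` and `u, x` are orthonormal bases. By Birkhoff's theorem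
a doubly stochastic matrix is a convex combination of permutation matrices, and for those the
bound `∑ᵢ σᵢ τ_{π i} ≤ ∑ᵢ σᵢ τᵢ` is the rearrangement inequality.
-/

open Module
open scoped InnerProductSpace

theorem Monovary.dotProduct_mulVec_le_of_mem_doublyStochastic {R ι : Type*} [Field R]
    [LinearOrder R] [IsStrictOrderedRing R] [Fintype ι] [DecidableEq ι] {f g : ι → R}
    (hfg : Monovary f g) {M : Matrix ι ι R} (hM : M ∈ doublyStochastic R ι) :
    f ⬝ᵥ M *ᵥ g ≤ f ⬝ᵥ g := by
  have hlin : IsLinearMap R fun M : Matrix ι ι R => f ⬝ᵥ M *ᵥ g :=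
    ⟨fun M N => by rw [add_mulVec, dotProduct_add],
      fun c M => by rw [smul_mulVec, dotProduct_smul]⟩
  refine convexHull_min ?_ (convex_halfSpace_le hlin _)
    (doublyStochastic_eq_convexHull_permMatrix.subset hM)
  rintro _ ⟨σ, rfl⟩
  simpa [permMatrix_mulVec, dotProduct] using hfg.sum_mul_comp_perm_le_sum_mul (σ := σ)

section InnerProductSpace

variable {ι 𝕜 E F : Type*} [Fintype ι] [RCLike 𝕜]
  [NormedAddCommGroup E] [InnerProductSpace 𝕜 E]
  [NormedAddCommGroup F] [InnerProductSpace 𝕜 F]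

theorem OrthonormalBasis.norm_inner_sq_mem_doublyStochastic [DecidableEq ι]
    (b c : OrthonormalBasis ι 𝕜 E) :
    Matrix.of (fun i j => ‖⟪b i, c j⟫_𝕜‖ ^ 2) ∈ doublyStochastic ℝ ι := by
  refine mem_doublyStochastic_iff_sum.2 ⟨fun i j => sq_nonneg _, fun i => ?_, fun j => ?_⟩
  · simp [c.sum_sq_norm_inner_left, b.orthonormal.1 i]
  · simp [b.sum_sq_norm_inner_right, c.orthonormal.1 j]

theorem exists_orthonormalBasis_eq_norm_smul [FiniteDimensional 𝕜 F]
    (hF : finrank 𝕜 F = Fintype.card ι) {f : ι → F}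
    (hf : Pairwise fun i j => ⟪f i, f j⟫_𝕜 = 0) :
    ∃ u : OrthonormalBasis ι 𝕜 F, ∀ i, f i = (‖f i‖ : 𝕜) • u i := by
  set g : ι → F := fun i => (‖f i‖⁻¹ : 𝕜) • f i
  have hg : Orthonormal 𝕜 ({i | f i ≠ 0}.domRestrict g) := by
    refine ⟨fun i => norm_smul_inv_norm i.2, fun i j hij => ?_⟩
    simp [g, Set.domRestrict, inner_smul_left, inner_smul_right,
      hf (Subtype.coe_ne_coe.2 hij)]
  obtain ⟨u, hu⟩ := hg.exists_orthonormalBasis_extension_of_card_eq hF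
  refine ⟨u, fun i => ?_⟩
  by_cases hi : f i = 0
  · simp [hi]
  · rw [hu i hi, smul_smul, mul_inv_cancel₀ (by simpa using hi), one_smul]

theorem LinearMap.exists_orthonormalBasis_apply_eq_sqrt_smul [FiniteDimensional 𝕜 E]
    [FiniteDimensional 𝕜 F] (hF : finrank 𝕜 F = Fintype.card ι)
    (T : E →ₗ[𝕜] F) (v : OrthonormalBasis ι 𝕜 E) {μ : ι → ℝ}
    (hv : ∀ i, (adjoint T ∘ₗ T) (v i) = (μ i : 𝕜) • v i) :
    ∃ u : OrthonormalBasis ι 𝕜 F, ∀ i, T (v i) = (√(μ i) : 𝕜) • u i := by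
  classical
  have hinner : ∀ i j, ⟪T (v i), T (v j)⟫_𝕜 = if i = j then (μ i : 𝕜) else 0 := by
    intro i j
    rw [← adjoint_inner_right, ← comp_apply, hv, inner_smul_right,
      orthonormal_iff_ite.1 v.orthonormal]
    split_ifs with h <;> simp [h]
  have hnorm : ∀ i, ‖T (v i)‖ = √(μ i) := by
    intro i
    have hsq : ‖T (v i)‖ ^ 2 = μ i := by
      have hii := inner_self_eq_norm_sq_to_K (𝕜 := 𝕜) (T (v i))
      rw [hinner, if_pos rfl] at hii
      exact_mod_cast hii.symm
    rw [← hsq, Real.sqrt_sq (norm_nonneg _)]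
  obtain ⟨u, hu⟩ := exists_orthonormalBasis_eq_norm_smul hF
    (fun i j hij => (hinner i j).trans (if_neg hij))
  exact ⟨u, fun i => by rw [hu i, hnorm]⟩

theorem LinearMap.trace_comp_eq_sum_inner_mul_inner {S T : E →ₗ[𝕜] E}
    {v u x w : OrthonormalBasis ι 𝕜 E} {s t : ι → 𝕜}
    (hS : ∀ i, S (v i) = s i • u i) (hT : ∀ j, T (x j) = t j • w j) :
    trace 𝕜 E (S ∘ₗ T) = ∑ i, ∑ j, s i * t j * (⟪v i, w j⟫_𝕜 * ⟪x j, u i⟫_𝕜) := by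
  have hSw : ∀ j, S (w j) = ∑ i, (⟪v i, w j⟫_𝕜 * s i) • u i := fun j => by
    conv_lhs => rw [← v.sum_repr' (w j)]
    simp [map_sum, hS, smul_smul]
  rw [trace_eq_sum_inner _ x, Finset.sum_comm]
  refine Finset.sum_congr rfl fun j _ => ?_
  simp only [comp_apply, hT, map_smul, hSw, inner_smul_right, inner_sum, Finset.mul_sum]
  exact Finset.sum_congr rfl fun i _ => by ring

theorem LinearMap.norm_trace_comp_le [DecidableEq ι] {S T : E →ₗ[𝕜] E}
    {v u x w : OrthonormalBasis ι 𝕜 E} {s t : ι → ℝ}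
    (hS : ∀ i, S (v i) = (s i : 𝕜) • u i) (hT : ∀ j, T (x j) = (t j : 𝕜) • w j)
    (hs : 0 ≤ s) (ht : 0 ≤ t) (hst : Monovary s t) :
    ‖trace 𝕜 E (S ∘ₗ T)‖ ≤ ∑ i, s i * t i := by
  set P := Matrix.of fun i j => ‖⟪v i, w j⟫_𝕜‖ ^ 2
  set Q := Matrix.of fun i j => ‖⟪u i, x j⟫_𝕜‖ ^ 2
  set M := (1 / 2 : ℝ) • P + (1 / 2 : ℝ) • Q
  have hM : M ∈ doublyStochastic ℝ ι :=
    convex_doublyStochastic (v.norm_inner_sq_mem_doublyStochastic w)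
      (u.norm_inner_sq_mem_doublyStochastic x) (by norm_num) (by norm_num) (by norm_num)
  have hterm : ∀ i j,
      ‖(s i : 𝕜) * t j * (⟪v i, w j⟫_𝕜 * ⟪x j, u i⟫_𝕜)‖ ≤ s i * M i j * t j := by
    intro i j
    have hamgm := two_mul_le_add_sq ‖⟪v i, w j⟫_𝕜‖ ‖⟪u i, x j⟫_𝕜‖
    rw [norm_mul, norm_mul, norm_mul, norm_inner_symm (x j), RCLike.norm_ofReal,
      RCLike.norm_ofReal, abs_of_nonneg (hs i), abs_of_nonneg (ht j)]
    simp only [M, P, Q, Matrix.add_apply, Matrix.smul_apply, Matrix.of_apply, smul_eq_mul]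
    nlinarith [mul_nonneg (hs i) (ht j)]
  calc ‖trace 𝕜 E (S ∘ₗ T)‖
      ≤ ∑ i, ∑ j, s i * M i j * t j := by
        rw [trace_comp_eq_sum_inner_mul_inner hS hT]
        exact (norm_sum_le _ _).trans <| Finset.sum_le_sum fun i _ =>
          (norm_sum_le _ _).trans <| Finset.sum_le_sum fun j _ => hterm i j
    _ = s ⬝ᵥ M *ᵥ t := by simp only [dotProduct, mulVec, Finset.mul_sum, mul_assoc]
    _ ≤ ∑ i, s i * t i := hst.dotProduct_mulVec_le_of_mem_doublyStochastic hM

end InnerProductSpace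

theorem Matrix.trace_eq_trace_toEuclideanLin {𝕜 ι : Type*} [RCLike 𝕜] [Fintype ι]
    [DecidableEq ι] (A : Matrix ι ι 𝕜) : A.trace = LinearMap.trace 𝕜 _ (toEuclideanLin A) := by
  rw [toEuclideanLin_eq_toLin_orthonormal, trace_toLin_eq]

theorem singularValue_nonneg {n : ℕ} (A : Matrix (Fin n) (Fin n) ℂ) : 0 ≤ singularValue A :=
  fun _ => Real.sqrt_nonneg _

theorem singularValue_antitone {n : ℕ} (A : Matrix (Fin n) (Fin n) ℂ) :
    Antitone (singularValue A) :=
  fun _ _ hij => Real.sqrt_le_sqrt (Tuple.monotone_sort _ (Fin.rev_le_rev.2 hij))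

theorem exists_orthonormalBasis_toEuclideanLin_apply_eq_singularValue_smul {n : ℕ}
    (A : Matrix (Fin n) (Fin n) ℂ) :
    ∃ v u : OrthonormalBasis (Fin n) ℂ (EuclideanSpace ℂ (Fin n)),
      ∀ i, toEuclideanLin A (v i) = (singularValue A i : ℂ) • u i := by
  set hA := isHermitian_conjTranspose_mul_self A
  -- `q i` is the index of the `i`-th largest eigenvalue of `Aᴴ * A`, as in `singularValue`.
  set q : Equiv.Perm (Fin n) := Fin.revPerm.trans (Tuple.sort hA.eigenvalues)
  set v := hA.eigenvectorBasis.reindex q.symm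
  have hv : ∀ i, (LinearMap.adjoint (toEuclideanLin A) ∘ₗ toEuclideanLin A) (v i) =
      ((hA.eigenvalues ∘ q) i : ℂ) • v i := fun i => by
    rw [← toEuclideanLin_conjTranspose_eq_adjoint, ← toLpLin_mul_same, toLpLin_apply,
      OrthonormalBasis.reindex_apply, Equiv.symm_symm, hA.mulVec_eigenvectorBasis,
      WithLp.toLp_smul, WithLp.toLp_ofLp, Function.comp_apply, Complex.coe_smul]
  obtain ⟨u, hu⟩ := (toEuclideanLin A).exists_orthonormalBasis_apply_eq_sqrt_smul
    finrank_euclideanSpace v hv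
  exact ⟨v, u, hu⟩

/-- von Neumann's trace inequality. -/
theorem vonNeumann_trace_inequality {n : ℕ} (A B : Matrix (Fin n) (Fin n) ℂ) :
    ‖(A * B).trace‖ ≤ ∑ i, singularValue A i * singularValue B i := by
  obtain ⟨v, u, hA⟩ := exists_orthonormalBasis_toEuclideanLin_apply_eq_singularValue_smul A
  obtain ⟨x, w, hB⟩ := exists_orthonormalBasis_toEuclideanLin_apply_eq_singularValue_smul B
  rw [trace_eq_trace_toEuclideanLin, toLpLin_mul_same]
  exact LinearMap.norm_trace_comp_le hA hB (singularValue_nonneg A) (singularValue_nonneg B)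
    ((singularValue_antitone A).monovary (singularValue_antitone B))
end

section
/- Let X and Y be n×n complex matrices such that every column of X and every column of Y has Euclidean norm at most 1, and let S be an n×n contraction (operator norm at most 1). Then the operator norm (largest singular value) of the Hadamard product (X*Y) ∘ S is at most 1. -/
open Matrix Finset

/-! Expanding `(Xᴴ * Y) i j = ∑ k, conj (X k i) * Y k j` splits the sesquilinear form of
`M = (Xᴴ * Y) ⊙ S` along the rows of `X` and `Y`: `⟪w, M v⟫ = ∑ k, ⟪X k * w, S (Y k * v)⟫`.
Each term is at most `‖S‖ ‖X k * w‖ ‖Y k * v‖`, and after Cauchy–Schwarz over `k` the column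
bounds give `∑ k, ‖X k * w‖ ^ 2 ≤ ‖w‖ ^ 2`, so `‖M‖ ≤ ‖S‖` for the L2 operator norm. That norm
is the largest singular value, because `‖A‖ ^ 2 = ‖Aᴴ * A‖` and, in the C⋆-algebra of matrices,
the norm of a positive element is the top of its spectrum. -/

open scoped Matrix.Norms.L2Operator MatrixOrder ComplexOrder

theorem Tuple.sort_rev_zero_le_iff {α : Type*} [LinearOrder α] {n : ℕ} (hn : 0 < n)
    (f : Fin n → α) (r : α) :
    (f ∘ Tuple.sort f) (Fin.rev ⟨0, hn⟩) ≤ r ↔ ∀ i, f i ≤ r := by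
  refine ⟨fun h i => ?_, fun h => h _⟩
  have hi : f i = (f ∘ Tuple.sort f) ((Tuple.sort f)⁻¹ i) := by simp
  refine hi ▸ (Tuple.monotone_sort f ?_).trans h
  rw [Fin.le_def, Fin.val_rev]
  exact Nat.le_sub_one_of_lt ((Tuple.sort f)⁻¹ i).isLt

namespace Matrix

section Spectral

variable {n : Type*} [Fintype n] [DecidableEq n]

theorem PosSemidef.l2_opNorm_le_iff {A : Matrix n n ℂ} (hA : A.PosSemidef) {r : ℝ} (hr : 0 ≤ r) :
    ‖A‖ ≤ r ↔ ∀ i, hA.isHermitian.eigenvalues i ≤ r := by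
  rw [CStarAlgebra.norm_le_iff_le_algebraMap A hr (nonneg_iff_posSemidef.mpr hA),
    le_algebraMap_iff_spectrum_le hA.isHermitian.isSelfAdjoint,
    hA.isHermitian.spectrum_real_eq_range_eigenvalues, Set.forall_mem_range]

theorem l2_opNorm_le_iff_eigenvalues_conjTranspose_mul_self_le (A : Matrix n n ℂ) {r : ℝ}
    (hr : 0 ≤ r) :
    ‖A‖ ≤ r ↔ ∀ i, (isHermitian_conjTranspose_mul_self A).eigenvalues i ≤ r ^ 2 := by
  rw [← (posSemidef_conjTranspose_mul_self A).l2_opNorm_le_iff (sq_nonneg r),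
    l2_opNorm_conjTranspose_mul_self, ← sq, sq_le_sq₀ (norm_nonneg A) hr]

end Spectral

section Hadamard

variable {𝕜 ι m n : Type*} [RCLike 𝕜] [Fintype ι] [Fintype m] [Fintype n]

theorem inner_hadamard_conjTranspose_mul_mulVec (X : Matrix ι m 𝕜) (Y : Matrix ι n 𝕜)
    (S : Matrix m n 𝕜) (w : EuclideanSpace 𝕜 m) (v : EuclideanSpace 𝕜 n) :
    inner 𝕜 w (WithLp.toLp 2 (((Xᴴ * Y) ⊙ S) *ᵥ v.ofLp)) =
      ∑ k, inner 𝕜 (WithLp.toLp 2 (X k * w.ofLp)) (WithLp.toLp 2 (S *ᵥ (Y k * v.ofLp))) := by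
  simp only [PiLp.inner_apply, mulVec, dotProduct, hadamard_apply, mul_apply, conjTranspose_apply,
    Pi.mul_apply, RCLike.inner_apply, RCLike.star_def, map_mul, Finset.sum_mul]
  refine (Finset.sum_congr rfl fun i _ => Finset.sum_comm).trans ?_
  rw [Finset.sum_comm]
  refine sum_congr rfl fun k _ => sum_congr rfl fun i _ => sum_congr rfl fun j _ => ?_
  ring

theorem sum_norm_sq_mul_le (X : Matrix ι m 𝕜) (hX : ∀ j, ∑ k, ‖X k j‖ ^ 2 ≤ 1)
    (w : EuclideanSpace 𝕜 m) :
    ∑ k, ‖WithLp.toLp 2 (X k * w.ofLp)‖ ^ 2 ≤ ‖w‖ ^ 2 := by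
  simp only [EuclideanSpace.norm_sq_eq, Pi.mul_apply, norm_mul, mul_pow]
  rw [Finset.sum_comm]
  refine Finset.sum_le_sum fun i _ => ?_
  rw [← Finset.sum_mul]
  exact mul_le_of_le_one_left (sq_nonneg _) (hX i)

theorem l2_opNorm_hadamard_conjTranspose_mul_le [DecidableEq n] (X : Matrix ι m 𝕜)
    (Y : Matrix ι n 𝕜) (S : Matrix m n 𝕜) (hX : ∀ j, ∑ k, ‖X k j‖ ^ 2 ≤ 1)
    (hY : ∀ j, ∑ k, ‖Y k j‖ ^ 2 ≤ 1) :
    ‖(Xᴴ * Y) ⊙ S‖ ≤ ‖S‖ := by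
  rw [l2_opNorm_def]
  refine ContinuousLinearMap.opNorm_le_of_re_inner_le (norm_nonneg S) fun v w hv hw => ?_
  set a : ι → EuclideanSpace 𝕜 m := fun k => WithLp.toLp 2 (X k * w.ofLp)
  set b : ι → EuclideanSpace 𝕜 n := fun k => WithLp.toLp 2 (Y k * v.ofLp)
  have ha : √(∑ k, ‖a k‖ ^ 2) ≤ 1 := by
    simpa [hw] using sum_norm_sq_mul_le X hX w
  have hb : √(∑ k, ‖b k‖ ^ 2) ≤ 1 := by
    simpa [hv] using sum_norm_sq_mul_le Y hY v
  calc RCLike.re (inner 𝕜 _ w) ≤ ‖inner 𝕜 w (WithLp.toLp 2 (((Xᴴ * Y) ⊙ S) *ᵥ v.ofLp))‖ := by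
        rw [norm_inner_symm]; exact RCLike.re_le_norm _
    _ = ‖∑ k, inner 𝕜 (a k) (WithLp.toLp 2 (S *ᵥ (b k).ofLp))‖ := by
        rw [inner_hadamard_conjTranspose_mul_mulVec]
    _ ≤ ∑ k, ‖a k‖ * (‖S‖ * ‖b k‖) := by
        refine (norm_sum_le _ _).trans (Finset.sum_le_sum fun k _ => ?_)
        exact (norm_inner_le_norm _ _).trans
          (mul_le_mul_of_nonneg_left (l2_opNorm_mulVec S (b k)) (norm_nonneg _))
    _ = ‖S‖ * ∑ k, ‖a k‖ * ‖b k‖ := by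
        rw [Finset.mul_sum]; exact Finset.sum_congr rfl fun k _ => by ring
    _ ≤ ‖S‖ * (√(∑ k, ‖a k‖ ^ 2) * √(∑ k, ‖b k‖ ^ 2)) :=
        mul_le_mul_of_nonneg_left (Real.sum_mul_le_sqrt_mul_sqrt _ _ _) (norm_nonneg S)
    _ ≤ ‖S‖ := mul_le_of_le_one_right (norm_nonneg S) (mul_le_one₀ ha (Real.sqrt_nonneg _) hb)

end Hadamard

end Matrix

theorem singularValue_zero_le_iff {n : ℕ} (hn : 0 < n) (A : Matrix (Fin n) (Fin n) ℂ) {r : ℝ}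
    (hr : 0 ≤ r) : singularValue A ⟨0, hn⟩ ≤ r ↔ ‖A‖ ≤ r := by
  rw [singularValue, Real.sqrt_le_left hr, Tuple.sort_rev_zero_le_iff,
    l2_opNorm_le_iff_eigenvalues_conjTranspose_mul_self_le A hr]

theorem singularValue_zero_eq_l2_opNorm {n : ℕ} (hn : 0 < n) (A : Matrix (Fin n) (Fin n) ℂ) :
    singularValue A ⟨0, hn⟩ = ‖A‖ :=
  le_antisymm ((singularValue_zero_le_iff hn A (norm_nonneg A)).mpr le_rfl)
    ((singularValue_zero_le_iff hn A (Real.sqrt_nonneg _)).mp le_rfl)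

theorem hadamard_contraction_opNorm_le_one {n : ℕ} (hn : 0 < n)
    (X Y S : Matrix (Fin n) (Fin n) ℂ)
    (hX : ∀ i, colNorm X i ≤ 1) (hY : ∀ i, colNorm Y i ≤ 1)
    (hS : singularValue S ⟨0, hn⟩ ≤ 1) :
    singularValue (Matrix.hadamard (Xᴴ * Y) S) ⟨0, hn⟩ ≤ 1 := by
  rw [singularValue_zero_eq_l2_opNorm] at hS ⊢
  exact (l2_opNorm_hadamard_conjTranspose_mul_le X Y S (fun j => Real.sqrt_le_one.mp (hX j))
    (fun j => Real.sqrt_le_one.mp (hY j))).trans hS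
end

section
/- Let X and Y be n×n complex matrices such that every column of X and every column of Y has Euclidean norm exactly 1, and let Q = uv* be a rank-one partial isometry (u, v unit vectors in ℂ^n). Then the trace norm (sum of all singular values) of the Hadamard product (X*Y) ∘ Q is at most 1. -/
open Matrix Finset

/-!
Writing `A = X * diagonal (star u)` and `B = Y * diagonal (star v)`, the Hadamard product is
`Aᴴ * B`, and `A`, `B` have Frobenius norm `1` since the columns of `X`, `Y` and the vectors `u`,
`v` are unit vectors. The trace norm of `Aᴴ * B` is at most `‖A‖_F * ‖B‖_F`: diagonalize
`(Aᴴ * B)ᴴ * (Aᴴ * B) = V * diagonal (s ^ 2) * Vᴴ` and normalize the orthogonal columns of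
`Aᴴ * B * V` to a partial isometry `Z`; then `∑ sᵢ = trace (Zᴴ * Aᴴ * B * V) = ⟪A * Z, B * V⟫_F`,
which Cauchy–Schwarz bounds, and right multiplication by a partial isometry does not increase the
Frobenius norm.
-/

attribute [local instance] Matrix.frobeniusNormedAddCommGroup

namespace Matrix

section Frobenius

variable {𝕜 : Type*} [RCLike 𝕜] {l m n : Type*} [Fintype l] [Fintype m] [Fintype n]

lemma frobenius_norm_sq_eq_sum (A : Matrix m n 𝕜) : ‖A‖ ^ 2 = ∑ i, ∑ j, ‖A i j‖ ^ 2 := by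
  change ‖WithLp.toLp 2 fun i => WithLp.toLp 2 (A i)‖ ^ 2 = _
  simp [PiLp.norm_sq_eq_of_L2]

lemma trace_conjTranspose_mul_self_eq_frobenius_norm_sq (A : Matrix m n 𝕜) :
    trace (Aᴴ * A) = ((‖A‖ ^ 2 : ℝ) : 𝕜) := by
  simp [frobenius_norm_sq_eq_sum, trace, mul_apply, Finset.sum_comm (γ := m), RCLike.conj_mul]

lemma norm_trace_conjTranspose_mul_le (A B : Matrix m n 𝕜) :
    ‖trace (Aᴴ * B)‖ ≤ ‖A‖ * ‖B‖ := by
  have h : trace (Aᴴ * B) =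
      inner 𝕜 (WithLp.toLp 2 fun i => (WithLp.toLp 2 (A i) : EuclideanSpace 𝕜 n))
        (WithLp.toLp 2 fun i => (WithLp.toLp 2 (B i) : EuclideanSpace 𝕜 n)) := by
    simp [trace, mul_apply, PiLp.inner_apply, Finset.sum_comm (γ := m), mul_comm]
  rw [h]
  exact norm_inner_le_norm _ _

lemma frobenius_norm_mul_diagonal_sq [DecidableEq n] (X : Matrix m n 𝕜) (w : n → 𝕜) :
    ‖X * diagonal w‖ ^ 2 = ∑ j, ‖w j‖ ^ 2 * ∑ i, ‖X i j‖ ^ 2 := by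
  simp [frobenius_norm_sq_eq_sum, mul_diagonal, mul_pow, Finset.mul_sum, mul_comm,
    Finset.sum_comm (γ := m)]

def IsPartialIsometry (Z : Matrix m n 𝕜) : Prop :=
  Z * Zᴴ * Z = Z

lemma isPartialIsometry_of_mem_unitaryGroup [DecidableEq n] {V : Matrix n n 𝕜}
    (hV : V ∈ unitaryGroup n 𝕜) : IsPartialIsometry V := by
  rw [IsPartialIsometry, Matrix.mul_assoc, ← star_eq_conjTranspose,
    (mem_unitaryGroup_iff'.mp hV), Matrix.mul_one]

/-- `1 - Z * Zᴴ` is an orthogonal projection, so `‖A‖² = ‖A * Z‖² + ‖A * (1 - Z * Zᴴ)‖²`. -/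
lemma IsPartialIsometry.frobenius_norm_mul_le {Z : Matrix m n 𝕜} (hZ : IsPartialIsometry Z)
    (A : Matrix l m 𝕜) : ‖A * Z‖ ≤ ‖A‖ := by
  classical
  set Q := 1 - Z * Zᴴ
  have hQ : Qᴴ = Q := by simp [Q, conjTranspose_mul]
  have hQQ : Q * Q = Q := by
    simp [Q, sub_mul, mul_sub, ← Matrix.mul_assoc, show Z * Zᴴ * Z = Z from hZ]
  have hAQ : trace ((A * Q)ᴴ * (A * Q)) = trace (Aᴴ * A) - trace ((A * Z)ᴴ * (A * Z)) :=
    calc trace ((A * Q)ᴴ * (A * Q)) = trace (Aᴴ * A * (Q * Q)) := by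
          rw [conjTranspose_mul, hQ, Matrix.mul_assoc, trace_mul_comm]
          simp only [Matrix.mul_assoc]
      _ = trace (Aᴴ * A) - trace (Aᴴ * A * (Z * Zᴴ)) := by
          rw [hQQ, Matrix.mul_sub, Matrix.mul_one, trace_sub]
      _ = trace (Aᴴ * A) - trace ((A * Z)ᴴ * (A * Z)) := by
          rw [conjTranspose_mul, Matrix.mul_assoc Zᴴ, trace_mul_comm Zᴴ]
          simp only [Matrix.mul_assoc]
  have h : ‖A * Q‖ ^ 2 = ‖A‖ ^ 2 - ‖A * Z‖ ^ 2 := by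
    apply RCLike.ofReal_injective (K := 𝕜)
    simpa only [trace_conjTranspose_mul_self_eq_frobenius_norm_sq, RCLike.ofReal_sub] using hAQ
  nlinarith [sq_nonneg ‖A * Q‖, norm_nonneg (A * Z), norm_nonneg A]

lemma conjTranspose_diagonal_ofReal {ι : Type*} [DecidableEq ι] (d : ι → ℝ) :
    (diagonal fun i => (d i : 𝕜))ᴴ = diagonal fun i => (d i : 𝕜) :=
  isHermitian_diagonal_of_self_adjoint _ (by ext; simp [RCLike.conj_ofReal])

section PolarFactor

variable [DecidableEq n] {N : Matrix m n 𝕜} {s : n → ℝ}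

/-- As `0⁻¹ = 0`, the zero columns of `N` stay zero and the others are normalized. -/
lemma isPartialIsometry_mul_diagonal_inv
    (hN : Nᴴ * N = diagonal fun i => ((s i ^ 2 : ℝ) : 𝕜)) :
    IsPartialIsometry (N * diagonal fun i => (((s i)⁻¹ : ℝ) : 𝕜)) := by
  have key (x : ℝ) : x⁻¹ * (x⁻¹ * (x ^ 2 * x⁻¹)) = x⁻¹ := by
    rcases eq_or_ne x 0 with rfl | hx
    · simp
    · field_simp
  simp only [IsPartialIsometry, conjTranspose_mul, conjTranspose_diagonal_ofReal,
    Matrix.mul_assoc]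
  rw [← Matrix.mul_assoc Nᴴ, hN]
  simp only [diagonal_mul_diagonal]
  congr 2
  ext i
  exact_mod_cast key (s i)

lemma conjTranspose_mul_diagonal_inv_mul
    (hN : Nᴴ * N = diagonal fun i => ((s i ^ 2 : ℝ) : 𝕜)) :
    (N * diagonal fun i => (((s i)⁻¹ : ℝ) : 𝕜))ᴴ * N = diagonal fun i => ((s i : ℝ) : 𝕜) := by
  rw [conjTranspose_mul, Matrix.mul_assoc, hN, conjTranspose_diagonal_ofReal,
    diagonal_mul_diagonal]
  congr 1
  ext i
  rw [← RCLike.ofReal_mul]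
  rcases eq_or_ne (s i) 0 with h | h
  · simp [h]
  · field_simp

end PolarFactor

lemma conjTranspose_mul_self_mul_eigenvectorUnitary [DecidableEq n] (M : Matrix m n 𝕜) :
    (M * ((isHermitian_conjTranspose_mul_self M).eigenvectorUnitary : Matrix n n 𝕜))ᴴ *
        (M * ((isHermitian_conjTranspose_mul_self M).eigenvectorUnitary : Matrix n n 𝕜)) =
      diagonal fun i => ((isHermitian_conjTranspose_mul_self M).eigenvalues i : 𝕜) := by
  have h := (isHermitian_conjTranspose_mul_self M).conjStarAlgAut_star_eigenvectorUnitary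
  rw [Unitary.conjStarAlgAut_star_apply] at h
  simpa [conjTranspose_mul, Matrix.mul_assoc, Function.comp_def, star_eq_conjTranspose] using h

noncomputable def traceNorm [DecidableEq n] (M : Matrix m n 𝕜) : ℝ :=
  ∑ i, √((isHermitian_conjTranspose_mul_self M).eigenvalues i)

theorem traceNorm_conjTranspose_mul_le [DecidableEq n] (A : Matrix l m 𝕜) (B : Matrix l n 𝕜) :
    traceNorm (Aᴴ * B) ≤ ‖A‖ * ‖B‖ := by
  set M := Aᴴ * B
  set hH := isHermitian_conjTranspose_mul_self M
  set V : Matrix n n 𝕜 := (hH.eigenvectorUnitary : Matrix n n 𝕜)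
  set s : n → ℝ := fun i => √(hH.eigenvalues i)
  have hN : (M * V)ᴴ * (M * V) = diagonal fun i => ((s i ^ 2 : ℝ) : 𝕜) := by
    simp only [s, Real.sq_sqrt (eigenvalues_conjTranspose_mul_self_nonneg M _)]
    exact conjTranspose_mul_self_mul_eigenvectorUnitary M
  set Z := M * V * diagonal fun i => (((s i)⁻¹ : ℝ) : 𝕜)
  have htrace : ((traceNorm M : ℝ) : 𝕜) = trace ((A * Z)ᴴ * (B * V)) := by
    rw [conjTranspose_mul, Matrix.mul_assoc, ← Matrix.mul_assoc Aᴴ,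
      conjTranspose_mul_diagonal_inv_mul hN, trace_diagonal]
    simp [traceNorm, s]
  calc traceNorm M = ‖trace ((A * Z)ᴴ * (B * V))‖ := by
        rw [← htrace, RCLike.norm_ofReal, abs_of_nonneg (by unfold traceNorm; positivity)]
    _ ≤ ‖A * Z‖ * ‖B * V‖ := norm_trace_conjTranspose_mul_le _ _
    _ ≤ ‖A‖ * ‖B‖ :=
        mul_le_mul ((isPartialIsometry_mul_diagonal_inv hN).frobenius_norm_mul_le A)
          ((isPartialIsometry_of_mem_unitaryGroup hH.eigenvectorUnitary.2).frobenius_norm_mul_le B)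
          (norm_nonneg _) (norm_nonneg _)

end Frobenius

lemma hadamard_conjTranspose_mul_of_mul_star {α : Type*} [CommSemiring α] [StarRing α]
    {l m n : Type*} [Fintype l] [Fintype m] [Fintype n] [DecidableEq m] [DecidableEq n]
    (X : Matrix l m α) (Y : Matrix l n α) (u : m → α) (v : n → α) :
    (Xᴴ * Y) ⊙ (of fun i j => u i * star (v j)) =
      (X * diagonal (star u))ᴴ * (Y * diagonal (star v)) := by
  rw [conjTranspose_mul, diagonal_conjTranspose, star_star, Matrix.mul_assoc,
    ← Matrix.mul_assoc Xᴴ]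
  ext i j
  simp only [hadamard_apply, of_apply, diagonal_mul, mul_diagonal, Pi.star_apply]
  ring

lemma sum_singularValue_eq_traceNorm {n : ℕ} (A : Matrix (Fin n) (Fin n) ℂ) :
    ∑ i, singularValue A i = traceNorm A :=
  Equiv.sum_comp (Fin.revPerm.trans (Tuple.sort (isHermitian_conjTranspose_mul_self A).eigenvalues))
    fun j => √((isHermitian_conjTranspose_mul_self A).eigenvalues j)

lemma frobenius_norm_mul_diagonal_star_eq_one {n : ℕ} {X : Matrix (Fin n) (Fin n) ℂ} {u : Fin n → ℂ}
    (hX : ∀ j, colNorm X j = 1) (hu : ∑ i, ‖u i‖ ^ 2 = 1) : ‖X * diagonal (star u)‖ = 1 := by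
  have hcol (j : Fin n) : ∑ i, ‖X i j‖ ^ 2 = 1 := by
    simpa [colNorm] using hX j
  rw [← pow_eq_one_iff_of_nonneg (norm_nonneg _) two_ne_zero, frobenius_norm_mul_diagonal_sq]
  simpa [hcol] using hu

end Matrix

theorem hadamard_rankOne_traceNorm_le_one {n : ℕ}
    (X Y : Matrix (Fin n) (Fin n) ℂ) (u v : Fin n → ℂ)
    (hX : ∀ i, colNorm X i = 1) (hY : ∀ i, colNorm Y i = 1)
    (hu : ∑ i, ‖u i‖ ^ 2 = 1) (hv : ∑ i, ‖v i‖ ^ 2 = 1) :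
    ∑ i, singularValue
        (Matrix.hadamard (Xᴴ * Y) (Matrix.of fun i j => u i * star (v j))) i ≤ 1 := by
  rw [sum_singularValue_eq_traceNorm, hadamard_conjTranspose_mul_of_mul_star]
  calc _ ≤ ‖X * diagonal (star u)‖ * ‖Y * diagonal (star v)‖ := traceNorm_conjTranspose_mul_le _ _
    _ = 1 := by
      rw [frobenius_norm_mul_diagonal_star_eq_one hX hu,
        frobenius_norm_mul_diagonal_star_eq_one hY hv, one_mul]
end

section
/- For x ∈ ℝ^n and a weight w with w_1 ≥ ... ≥ w_k > 0, the dual norm of the weighted k-norm ‖x‖ = Σ_{i=1}^k w_i |x_i|↓ (where |x_i|↓ are the decreasingly ordered absolute values of the entries of x) is given by the maximum over j of ‖x‖_(j)/(w_1+...+w_j) for j = 1,...,k−1, together with ‖x‖_(n)/(w_1+...+w_k), where ‖x‖_(j) denotes the sum of the j largest absolute values of entries of x. -/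
open Matrix Finset

/-- The `i`-th largest absolute value of the entries of `x`. -/
noncomputable def absSorted {n : ℕ} (x : Fin n → ℝ) (i : Fin n) : ℝ :=
  ((fun j => |x j|) ∘ Tuple.sort (fun j => |x j|)) i.rev

/-- `‖x‖_(j)`: the sum of the `j` largest absolute values of entries of `x`. -/
noncomputable def kNorm {n : ℕ} (j : ℕ) (x : Fin n → ℝ) : ℝ :=
  ∑ i ∈ Finset.univ.filter (fun i : Fin n => (i : ℕ) < j), absSorted x i

/-- The weighted `k`-norm `Σ_{i=1}^k w_i |x_i|↓`. -/
noncomputable def wkNorm {n : ℕ} (w : Fin n → ℝ) (k : ℕ) (x : Fin n → ℝ) : ℝ :=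
  ∑ i ∈ Finset.univ.filter (fun i : Fin n => (i : ℕ) < k), w i * absSorted x i

/-! By the rearrangement inequality, `⟨x, y⟩ ≤ ∑ |x|↓ᵢ |y|↓ᵢ`. As `|x|↓` is antitone and
nonnegative, Abel summation turns prefix-sum bounds `∑_{i<j} bᵢ ≤ ∑_{i<j} cᵢ` into
`∑ |x|↓ᵢ bᵢ ≤ ∑ |x|↓ᵢ cᵢ`. For `b = |y|↓` and `cᵢ = M wᵢ [i < k]` these bounds hold as soon as
`M` dominates every ratio on the right-hand side, and then `⟨x, y⟩ ≤ M ‖x‖`. Conversely, the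
ratio for `j < k` is attained by `x = sign y / (w₁ + ⋯ + w_j)` on the `j` largest entries of
`|y|`, and the last one by `x = sign y / (w₁ + ⋯ + w_k)` on all entries. -/

def prefixSum {M : Type*} [AddCommMonoid M] {n : ℕ} (j : ℕ) (f : Fin n → M) : M :=
  ∑ i ∈ univ.filter (fun i : Fin n => (i : ℕ) < j), f i

section prefixSum

variable {M : Type*} [AddCommMonoid M] {n : ℕ}

theorem prefixSum_eq_sum_range {j : ℕ} (hj : j ≤ n) (f : Fin n → M) :
    prefixSum j f = ∑ m ∈ range j, if h : m < n then f ⟨m, h⟩ else 0 := by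
  have hrange : range j = (range n).filter (· < j) := by
    ext; simp only [mem_filter, mem_range]; omega
  rw [prefixSum, sum_filter, sum_fin_eq_sum_range, hrange, sum_filter]
  exact sum_congr rfl fun m hm => by simp [mem_range.mp hm]

theorem prefixSum_ite (j k : ℕ) (f : Fin n → M) :
    prefixSum j (fun i => if (i : ℕ) < k then f i else 0) = prefixSum (min j k) f := by
  simp only [prefixSum, ← sum_filter, filter_filter, lt_min_iff]

theorem prefixSum_mono [PartialOrder M] [IsOrderedAddMonoid M] {f : Fin n → M}
    (hf : ∀ i, 0 ≤ f i) {j j' : ℕ} (h : j ≤ j') : prefixSum j f ≤ prefixSum j' f :=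
  sum_le_sum_of_subset_of_nonneg
    (fun i hi => by simp only [mem_filter] at hi ⊢; exact ⟨hi.1, hi.2.trans_le h⟩)
    fun i _ _ => hf i

theorem prefixSum_pos [PartialOrder M] [IsOrderedCancelAddMonoid M] {j : ℕ} {f : Fin n → M}
    (hj : 1 ≤ j) (hjn : j ≤ n)
    (hf : ∀ i : Fin n, (i : ℕ) < j → 0 < f i) : 0 < prefixSum j f :=
  sum_pos (fun i hi => hf i (mem_filter.mp hi).2) ⟨⟨0, by omega⟩, by simp only [mem_filter, mem_univ, true_and]; omega⟩

end prefixSum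

theorem sum_range_mul_nonpos_of_sum_range_nonpos {a d : ℕ → ℝ} {n : ℕ} (ha : Antitone a)
    (ha0 : ∀ m, 0 ≤ a m) (hd : ∀ j ≤ n, ∑ m ∈ range j, d m ≤ 0) :
    ∑ m ∈ range n, a m * d m ≤ 0 := by
  have hparts := sum_range_by_parts a d n
  simp only [smul_eq_mul] at hparts
  rw [hparts]
  have hmid : 0 ≤ ∑ m ∈ range (n - 1), (a (m + 1) - a m) * ∑ i ∈ range (m + 1), d i :=
    sum_nonneg fun m hm => mul_nonneg_of_nonpos_of_nonpos
      (sub_nonpos.mpr (ha m.le_succ)) (hd _ (by simp only [mem_range] at hm; omega))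
  have hlast : a (n - 1) * ∑ i ∈ range n, d i ≤ 0 :=
    mul_nonpos_of_nonneg_of_nonpos (ha0 _) (hd n le_rfl)
  linarith

theorem sum_mul_le_sum_mul_of_prefixSum_le {n : ℕ} {a b c : Fin n → ℝ} (ha : Antitone a)
    (ha0 : ∀ i, 0 ≤ a i) (h : ∀ j ≤ n, prefixSum j b ≤ prefixSum j c) :
    ∑ i, a i * b i ≤ ∑ i, a i * c i := by
  let pad (f : Fin n → ℝ) (m : ℕ) : ℝ := if h : m < n then f ⟨m, h⟩ else 0
  have hpad : Antitone (pad a) := by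
    intro m m' hmm'
    by_cases hm' : m' < n
    · simp only [pad, hm', lt_of_le_of_lt hmm' hm', dite_true]
      exact ha (Fin.mk_le_mk.mpr hmm')
    · simp only [pad, hm', dite_false]
      split <;> simp [ha0]
  have habel := sum_range_mul_nonpos_of_sum_range_nonpos (d := pad (b - c)) hpad
    (fun m => by simp only [pad]; split <;> simp [ha0]) fun j hj => by
      have hj' := h j hj
      rw [prefixSum_eq_sum_range hj, prefixSum_eq_sum_range hj, ← sub_nonpos,
        ← sum_sub_distrib] at hj'
      convert hj' using 2 with m
      simp only [pad]
      split <;> simp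
  rw [← sub_nonpos, ← sum_sub_distrib, sum_fin_eq_sum_range]
  convert habel using 2 with m hm
  simp [pad, mem_range.mp hm, mul_sub]

noncomputable def absSortPerm {n : ℕ} (x : Fin n → ℝ) : Equiv.Perm (Fin n) :=
  Fin.revPerm.trans (Tuple.sort fun j => |x j|)

section absSorted

variable {n : ℕ} (x : Fin n → ℝ)

theorem absSorted_eq_abs_absSortPerm (i : Fin n) : absSorted x i = |x (absSortPerm x i)| := rfl

theorem absSorted_nonneg (i : Fin n) : 0 ≤ absSorted x i := abs_nonneg _

theorem antitone_absSorted : Antitone (absSorted x) :=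
  fun _ _ hij => Tuple.monotone_sort (fun j => |x j|) (Fin.rev_le_rev.mpr hij)

theorem kNorm_eq_prefixSum (j : ℕ) : kNorm j x = prefixSum j (absSorted x) := rfl

theorem kNorm_nonneg (j : ℕ) : 0 ≤ kNorm j x :=
  sum_nonneg fun i _ => absSorted_nonneg x i

theorem sum_mul_le_sum_absSorted_mul_absSorted (y : Fin n → ℝ) :
    ∑ i, x i * y i ≤ ∑ i, absSorted x i * absSorted y i := by
  set σ := absSortPerm x
  set τ := absSortPerm y
  calc ∑ i, x i * y i ≤ ∑ i, |x i| * |y i| :=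
        sum_le_sum fun i _ => (le_abs_self _).trans (abs_mul _ _).le
    _ = ∑ i, |x (σ i)| * |y (σ i)| := (Equiv.sum_comp σ fun t => |x t| * |y t|).symm
    _ = ∑ i, absSorted x i * absSorted y ((σ.trans τ.symm) i) := by
        simp [absSorted_eq_abs_absSortPerm, σ, τ]
    _ ≤ ∑ i, absSorted x i * absSorted y i :=
        ((antitone_absSorted x).monovary (antitone_absSorted y)).sum_mul_comp_perm_le_sum_mul

theorem absSorted_eq_zero_of_card_le {m : ℕ} (hx : #{t | x t ≠ 0} ≤ m) {i : Fin n}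
    (hi : m ≤ i) : absSorted x i = 0 := by
  by_contra hne
  -- the `i + 1` largest entries are all nonzero, and `absSortPerm x` is injective
  have hpos : ∀ i' ∈ Iic i, x (absSortPerm x i') ≠ 0 := fun i' hi' => by
    have := antitone_absSorted x (mem_Iic.mp hi')
    rw [← abs_pos, ← absSorted_eq_abs_absSortPerm]
    exact (lt_of_le_of_ne (absSorted_nonneg x i) (Ne.symm hne)).trans_le this
  have := card_le_card_of_injOn (t := univ.filter fun t => x t ≠ 0) (absSortPerm x)
    (fun i' hi' => by simpa using hpos i' hi')
    (absSortPerm x).injective.injOn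
  simp only [Fin.card_Iic] at this
  omega

end absSorted

section weighted

variable {n k : ℕ} {w : Fin n → ℝ}

theorem sum_mul_le_mul_wkNorm {y : Fin n → ℝ} {M : ℝ}
    (hlt : ∀ j, 1 ≤ j → j < k → kNorm j y ≤ M * prefixSum j w)
    (htot : kNorm n y ≤ M * prefixSum k w) (x : Fin n → ℝ) :
    ∑ i, x i * y i ≤ M * wkNorm w k x := by
  have hprefix : ∀ j ≤ n, prefixSum j (absSorted y) ≤
      prefixSum j (fun i => if (i : ℕ) < k then M * w i else 0) := fun j hjn => by
    rw [prefixSum_ite, ← kNorm_eq_prefixSum, prefixSum, ← mul_sum]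
    rcases Nat.eq_zero_or_pos j with rfl | hj1
    · simp [kNorm]
    rcases lt_or_ge j k with hjk | hkj
    · rw [min_eq_left hjk.le]
      exact hlt j hj1 hjk
    · rw [min_eq_right hkj]
      exact (prefixSum_mono (absSorted_nonneg y) hjn).trans htot
  calc ∑ i, x i * y i ≤ ∑ i, absSorted x i * absSorted y i :=
        sum_mul_le_sum_absSorted_mul_absSorted x y
    _ ≤ ∑ i, absSorted x i * if (i : ℕ) < k then M * w i else 0 :=
        sum_mul_le_sum_mul_of_prefixSum_le (antitone_absSorted x) (absSorted_nonneg x) hprefix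
    _ = M * wkNorm w k x := by
        simp only [wkNorm, mul_sum, sum_filter, mul_ite, mul_zero]
        exact sum_congr rfl fun i _ => by split <;> ring

theorem wkNorm_le_of_abs_le_of_card_le (hw : ∀ i : Fin n, (i : ℕ) < k → 0 ≤ w i)
    {x : Fin n → ℝ} {c : ℝ} {m : ℕ} (hx : ∀ t, |x t| ≤ c)
    (hcard : #{t | x t ≠ 0} ≤ m) :
    wkNorm w k x ≤ c * prefixSum (min k m) w := by
  calc wkNorm w k x ≤ prefixSum k (fun i => if (i : ℕ) < m then w i * c else 0) := by
        refine sum_le_sum fun i hi => ?_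
        split_ifs with him
        · exact mul_le_mul_of_nonneg_left (hx _) (hw i (mem_filter.mp hi).2)
        · rw [absSorted_eq_zero_of_card_le x hcard (not_lt.mp him), mul_zero]
    _ = c * prefixSum (min k m) w := by
        rw [prefixSum_ite, prefixSum, prefixSum, mul_sum]
        simp only [mul_comm]

-- The witness is `c • sign y` restricted to the `m` largest entries of `|y|`.
theorem exists_abs_le_card_le_sum_mul_eq (y : Fin n → ℝ) (m : ℕ) {c : ℝ} (hc : 0 ≤ c) :
    ∃ x : Fin n → ℝ, (∀ t, |x t| ≤ c) ∧ #{t | x t ≠ 0} ≤ m ∧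
      ∑ t, x t * y t = c * kNorm m y := by
  set τ := absSortPerm y
  refine ⟨fun t => if ((τ.symm t : Fin n) : ℕ) < m then c * SignType.sign (y t) else 0,
    fun t => ?_, ?_, ?_⟩
  · have hsign : ∀ s : SignType, |(s : ℝ)| ≤ 1 := by intro s; cases s <;> simp
    dsimp only
    split_ifs
    · rw [abs_mul, abs_of_nonneg hc]
      exact mul_le_of_le_one_right hc (hsign _)
    · simpa using hc
  · calc #{t | _} ≤ #(range m) :=
          card_le_card_of_injOn (fun t => (τ.symm t : ℕ))
            (fun t ht => by by_contra h; simp_all)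
            fun t _ t' _ h => τ.symm.injective (Fin.val_injective h)
      _ = m := card_range m
  · rw [← Equiv.sum_comp τ, kNorm, mul_sum, sum_filter]
    refine sum_congr rfl fun i _ => ?_
    simp only [Equiv.symm_apply_apply]
    split_ifs
    · rw [mul_assoc, sign_mul_self, absSorted_eq_abs_absSortPerm]
    · rw [zero_mul]

theorem exists_wkNorm_le_one_sum_mul_eq (hw : ∀ i : Fin n, (i : ℕ) < k → 0 ≤ w i)
    (y : Fin n → ℝ) {m : ℕ} (hW : 0 < prefixSum (min k m) w) :
    ∃ x : Fin n → ℝ, wkNorm w k x ≤ 1 ∧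
      ∑ i, x i * y i = kNorm m y / prefixSum (min k m) w := by
  obtain ⟨x, habs, hcard, hsum⟩ := exists_abs_le_card_le_sum_mul_eq y m (inv_nonneg.mpr hW.le)
  refine ⟨x, ?_, by rw [hsum, inv_mul_eq_div]⟩
  calc wkNorm w k x ≤ (prefixSum (min k m) w)⁻¹ * prefixSum (min k m) w :=
        wkNorm_le_of_abs_le_of_card_le hw habs hcard
    _ = 1 := inv_mul_cancel₀ hW.ne'

end weighted

theorem dual_of_weighted_kNorm_general {n : ℕ} (k : ℕ) (hk1 : 1 ≤ k) (hkn : k ≤ n)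
    (w : Fin n → ℝ)
    (hwpos : ∀ i : Fin n, (i : ℕ) < k → 0 < w i)
    (y : Fin n → ℝ) :
    sSup {r : ℝ | ∃ x : Fin n → ℝ, wkNorm w k x ≤ 1 ∧ r = ∑ i, x i * y i} =
      sSup ({kNorm n y / ∑ i ∈ Finset.univ.filter (fun i : Fin n => (i : ℕ) < k), w i} ∪
        (fun j => kNorm j y /
            ∑ i ∈ Finset.univ.filter (fun i : Fin n => (i : ℕ) < j), w i) ''
          {j : ℕ | 1 ≤ j ∧ j < k}) := by
  set T := ({kNorm n y / prefixSum k w} ∪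
    (fun j => kNorm j y / prefixSum j w) '' {j : ℕ | 1 ≤ j ∧ j < k})
  change sSup _ = sSup T
  have hW : ∀ j, 1 ≤ j → j ≤ k → 0 < prefixSum j w := fun j hj1 hjk =>
    prefixSum_pos hj1 (hjk.trans hkn) fun i hi => hwpos i (hi.trans_le hjk)
  have hattain : ∀ m, 1 ≤ min k m → ∃ x, wkNorm w k x ≤ 1 ∧
      ∑ i, x i * y i = kNorm m y / prefixSum (min k m) w := fun m hm =>
    exists_wkNorm_le_one_sum_mul_eq (fun i hi => (hwpos i hi).le) y (hW _ hm (min_le_left k m))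
  have hTfin : T.Finite :=
    (Set.finite_singleton _).union (((Set.finite_Iio k).subset fun _ hj => hj.2).image _)
  have hle : ∀ r ∈ T, r ≤ sSup T := fun r hr => le_csSup hTfin.bddAbove hr
  have htot : kNorm n y / prefixSum k w ≤ sSup T := hle _ (Or.inl rfl)
  refine IsGreatest.csSup_eq ⟨?_, ?_⟩
  · rcases Set.Nonempty.csSup_mem (s := T) ⟨_, Or.inl rfl⟩ hTfin with
      hM | ⟨j, ⟨hj1, hjk⟩, hM⟩
    · obtain ⟨x, hx, hsum⟩ := hattain n (by omega)
      exact ⟨x, hx, by rw [Set.mem_singleton_iff.mp hM, hsum, min_eq_left hkn]⟩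
    · obtain ⟨x, hx, hsum⟩ := hattain j (by omega)
      exact ⟨x, hx, by rw [← hM, hsum, min_eq_right hjk.le]⟩
  · rintro _ ⟨x, hx, rfl⟩
    calc ∑ i, x i * y i ≤ sSup T * wkNorm w k x :=
          sum_mul_le_mul_wkNorm (fun j hj1 hjk =>
            (div_le_iff₀ (hW j hj1 hjk.le)).mp (hle _ (Or.inr ⟨j, ⟨hj1, hjk⟩, rfl⟩)))
            ((div_le_iff₀ (hW k hk1 le_rfl)).mp htot) x
      _ ≤ sSup T := mul_le_of_le_one_right
          ((div_nonneg (kNorm_nonneg y n) (hW k hk1 le_rfl).le).trans htot) hx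

theorem dual_of_weighted_kNorm {n : ℕ} (k : ℕ) (hk1 : 1 ≤ k) (hkn : k ≤ n)
    (w : Fin n → ℝ)
    (hw : ∀ i j : Fin n, i ≤ j → (j : ℕ) < k → w j ≤ w i)
    (hwpos : ∀ i : Fin n, (i : ℕ) < k → 0 < w i)
    (y : Fin n → ℝ) :
    sSup {r : ℝ | ∃ x : Fin n → ℝ, wkNorm w k x ≤ 1 ∧ r = ∑ i, x i * y i} =
      sSup ({kNorm n y / ∑ i ∈ Finset.univ.filter (fun i : Fin n => (i : ℕ) < k), w i} ∪
        (fun j => kNorm j y /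
            ∑ i ∈ Finset.univ.filter (fun i : Fin n => (i : ℕ) < j), w i) ''
          {j : ℕ | 1 ≤ j ∧ j < k}) :=
  dual_of_weighted_kNorm_general k hk1 hkn w hwpos y
end

section
/- For x ∈ ℝ^n and 1 ≤ k ≤ n, the dual norm of the k-norm ‖x‖_(k) = sum of the k largest absolute values of entries of x is equal to max(‖x‖_∞, ‖x‖_1 / k). -/
open Matrix Finset

/-!
If `‖y‖_∞ ≤ M` and `‖y‖_1 ≤ k M`, then for every `α ≥ 0` the bound `|x_i| ≤ (|x_i| - α)⁺ + α`
gives `⟨x, y⟩ ≤ M (k α + ∑ (|x_i| - α)⁺)`; when `α` is the `k`-th largest `|x_i|` the right-hand side is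
`M ‖x‖_(k)`. Hence the dual norm is at most `max (‖y‖_∞, ‖y‖_1 / k)`, and both values are attained:
`‖y‖_∞` at a signed unit vector and `‖y‖_1 / k` at `sign y / k`.
-/

lemma sum_mul_le_mul_add_sum_posPart_mul {ι : Type*} [Fintype ι] (x y : ι → ℝ) {M α : ℝ}
    (k : ℝ) (hα : 0 ≤ α) (hyM : ∀ i, |y i| ≤ M) (hsum : ∑ i, |y i| ≤ k * M) :
    ∑ i, x i * y i ≤ (k * α + ∑ i, (|x i| - α)⁺) * M := by
  have hterm : ∀ i, x i * y i ≤ (|x i| - α)⁺ * M + α * |y i| := fun i =>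
    calc x i * y i ≤ |x i| * |y i| := by rw [← abs_mul]; exact le_abs_self _
      _ ≤ ((|x i| - α)⁺ + α) * |y i| := by gcongr; linarith [le_posPart (|x i| - α)]
      _ ≤ (|x i| - α)⁺ * M + α * |y i| := by
        rw [add_mul]; gcongr; exact hyM i
  calc ∑ i, x i * y i ≤ (∑ i, (|x i| - α)⁺) * M + α * ∑ i, |y i| := by
        rw [sum_mul, mul_sum, ← sum_add_distrib]
        exact sum_le_sum fun i _ => hterm i
    _ ≤ (∑ i, (|x i| - α)⁺) * M + α * (k * M) := by gcongr
    _ = (k * α + ∑ i, (|x i| - α)⁺) * M := by ring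

lemma card_mul_add_sum_posPart_eq {ι : Type*} [Fintype ι] [DecidableEq ι] (x : ι → ℝ)
    (T : Finset ι) {α : ℝ} (hin : ∀ j ∈ T, α ≤ |x j|) (hout : ∀ j ∉ T, |x j| ≤ α) :
    T.card * α + ∑ i, (|x i| - α)⁺ = ∑ i ∈ T, |x i| := by
  rw [← sum_add_sum_compl T,
    sum_congr rfl fun i hi => posPart_eq_self.mpr (sub_nonneg.mpr (hin i hi)),
    sum_congr rfl fun i hi =>
      posPart_eq_zero.mpr (sub_nonpos.mpr (hout i (mem_compl.mp hi))),
    sum_sub_distrib]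
  simp

lemma abs_sign_le_one {α : Type*} [Ring α] [LinearOrder α] [IsStrictOrderedRing α] (r : α) :
    |(SignType.sign r : α)| ≤ 1 := by
  cases SignType.sign r <;> simp

lemma absSorted_antitone {n : ℕ} (x : Fin n → ℝ) : Antitone (absSorted x) :=
  fun _ _ h => Tuple.monotone_sort (fun j => |x j|) (Fin.rev_le_rev.mpr h)

lemma exists_finset_kNorm_eq_sum {n : ℕ} (k : ℕ) (hkn : k ≤ n) (x : Fin n → ℝ) :
    ∃ T : Finset (Fin n), T.card = k ∧ kNorm k x = ∑ j ∈ T, |x j| ∧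
      ∀ j ∉ T, ∀ j' ∈ T, |x j| ≤ |x j'| := by
  set e : Fin n ≃ Fin n := Fin.revPerm.trans (Tuple.sort fun j => |x j|)
  refine ⟨(univ.filter fun i : Fin n => (i : ℕ) < k).map e.toEmbedding, ?_, ?_, ?_⟩
  · rw [card_map, Fin.card_filter_val_lt, min_eq_right hkn]
  · rw [sum_map]; rfl
  · intro j hj j' hj'
    obtain ⟨i, rfl⟩ := e.surjective j
    simp only [mem_map_equiv, mem_filter, mem_univ, true_and, Equiv.symm_apply_apply,
      not_lt] at hj hj'
    rw [← e.apply_symm_apply j']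
    exact absSorted_antitone x (Fin.le_def.mpr (by omega))

lemma kNorm_le_mul_of_abs_le {n : ℕ} (k : ℕ) (hkn : k ≤ n) {x : Fin n → ℝ} {c : ℝ}
    (hc : ∀ j, |x j| ≤ c) : kNorm k x ≤ k * c := by
  have := sum_le_card_nsmul (univ.filter fun i : Fin n => (i : ℕ) < k)
    (absSorted x) c fun i _ => hc _
  rwa [Fin.card_filter_val_lt, min_eq_right hkn, nsmul_eq_mul] at this

lemma kNorm_le_sum_abs {n : ℕ} (k : ℕ) (x : Fin n → ℝ) : kNorm k x ≤ ∑ i, |x i| :=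
  calc kNorm k x ≤ ∑ i, absSorted x i :=
        sum_le_sum_of_subset_of_nonneg (subset_univ _) fun _ _ _ => abs_nonneg _
    _ = ∑ i, |x i| := (Fin.revPerm.trans (Tuple.sort fun j => |x j|)).sum_comp fun j => |x j|

lemma sum_mul_le_kNorm_mul {n k : ℕ} (hk1 : 1 ≤ k) (hkn : k ≤ n) (x y : Fin n → ℝ) {M : ℝ}
    (hyM : ∀ i, |y i| ≤ M) (hsum : ∑ i, |y i| ≤ k * M) :
    ∑ i, x i * y i ≤ kNorm k x * M := by
  obtain ⟨T, hcard, hT, hdom⟩ := exists_finset_kNorm_eq_sum k hkn x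
  have hT0 : T.Nonempty := card_pos.mp (by omega)
  have hα := card_mul_add_sum_posPart_eq x T (α := T.inf' hT0 fun j => |x j|)
    (fun _ hj => inf'_le _ hj) (fun j hj => le_inf' _ _ fun j' hj' => hdom j hj j' hj')
  rw [hT, ← hα, hcard]
  exact sum_mul_le_mul_add_sum_posPart_mul x y k (le_inf' _ _ fun _ _ => abs_nonneg _) hyM hsum

lemma exists_kNorm_le_one_eq_abs {n : ℕ} (k : ℕ) (y : Fin n → ℝ) (i : Fin n) :
    ∃ x : Fin n → ℝ, kNorm k x ≤ 1 ∧ |y i| = ∑ j, x j * y j := by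
  refine ⟨Pi.single i (SignType.sign (y i) : ℝ), (kNorm_le_sum_abs k _).trans ?_, ?_⟩
  · rw [Fintype.sum_eq_single i fun j hj => by simp [hj]]
    simpa using abs_sign_le_one (y i)
  · simp [Pi.single_apply]

lemma exists_kNorm_le_one_eq_sum_abs_div {n : ℕ} (k : ℕ) (hk1 : 1 ≤ k) (hkn : k ≤ n)
    (y : Fin n → ℝ) :
    ∃ x : Fin n → ℝ, kNorm k x ≤ 1 ∧ (∑ j, |y j|) / k = ∑ j, x j * y j := by
  have hk : (0 : ℝ) < k := by exact_mod_cast hk1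
  refine ⟨fun j => SignType.sign (y j) / k,
    (kNorm_le_mul_of_abs_le k hkn (c := 1 / k) fun j => ?_).trans ?_, ?_⟩
  · rw [abs_div, abs_of_pos hk]
    exact div_le_div_of_nonneg_right (abs_sign_le_one (y j)) hk.le
  · rw [mul_one_div_cancel hk.ne']
  · rw [sum_div]
    exact sum_congr rfl fun j _ => by rw [div_mul_eq_mul_div, sign_mul_self]

theorem dual_of_kNorm {n : ℕ} (k : ℕ) (hk1 : 1 ≤ k) (hkn : k ≤ n) (y : Fin n → ℝ) :
    sSup {r : ℝ | ∃ x : Fin n → ℝ, kNorm k x ≤ 1 ∧ r = ∑ i, x i * y i} =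
      max (Finset.univ.sup'
          (Finset.univ_nonempty_iff.mpr ⟨⟨0, lt_of_lt_of_le hk1 hkn⟩⟩)
          fun i => |y i|)
        ((∑ i, |y i|) / k) := by
  have hk : (0 : ℝ) < k := by exact_mod_cast hk1
  refine IsGreatest.csSup_eq ⟨max_rec' _ ?_ (exists_kNorm_le_one_eq_sum_abs_div k hk1 hkn y), ?_⟩
  · obtain ⟨i, -, hi⟩ := exists_mem_eq_sup' (univ_nonempty_iff.mpr ⟨⟨0, by omega⟩⟩)
      fun i => |y i|
    rw [hi]
    exact exists_kNorm_le_one_eq_abs k y i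
  · rintro _ ⟨x, hx, rfl⟩
    refine (sum_mul_le_kNorm_mul hk1 hkn x y (fun i => ?_) ?_).trans
      (mul_le_of_le_one_left (le_max_of_le_right (by positivity)) hx)
    · exact le_max_of_le_left (le_sup' (fun i => |y i|) (mem_univ i))
    · exact (div_le_iff₀' hk).mp (le_max_right _ _)
end

section
/- There exist 3×3 matrices X, Y (namely X = Y = (1/√3)·J where J is the all-ones 3×3 matrix, so all columns of X and Y are unit vectors) and a 3×3 unitary U such that the largest singular value of the Fan product (X*Y) ⋆ U exceeds 1; explicitly U = (1/3)·[[2,1,2],[−2,2,1],[1,2,−2]] works. -/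
open Matrix Finset

/-- The Fan product. -/
def fanProduct {n : ℕ} (A B : Matrix (Fin n) (Fin n) ℂ) : Matrix (Fin n) (Fin n) ℂ :=
  Matrix.of fun i j => if i = j then -(A i i * B i i) else A i j * B i j

/-!
All columns of `X = Y = J / √3` are the same unit vector, so `Xᴴ * Y` is the all-ones matrix `J`,
and `J ⋆ U` is `U` with its diagonal negated. Negating the diagonal destroys unitarity: the Gram
matrix of the result has the eigenvector `(1, 1, 0)` with eigenvalue `13 / 9 > 1`.
-/

lemma mem_spectrum_real_of_mulVec_eq_smul {ι : Type*} [Fintype ι] [DecidableEq ι]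
    {M : Matrix ι ι ℂ} {v : ι → ℂ} (hv : v ≠ 0) {μ : ℝ} (hMv : M *ᵥ v = (μ : ℂ) • v) :
    μ ∈ spectrum ℝ M := by
  rw [spectrum.mem_iff, isUnit_iff_isUnit_det, isUnit_iff_ne_zero, not_not,
    ← exists_mulVec_eq_zero_iff]
  refine ⟨v, hv, ?_⟩
  rw [sub_mulVec, hMv, Algebra.algebraMap_eq_smul_one, smul_mulVec, one_mulVec, Complex.coe_smul,
    sub_self]

lemma Matrix.IsHermitian.le_eigenvalues_sort_last {𝕜 : Type*} [RCLike 𝕜] {n : ℕ}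
    {A : Matrix (Fin (n + 1)) (Fin (n + 1)) 𝕜} (hA : A.IsHermitian) {μ : ℝ}
    (hμ : μ ∈ spectrum ℝ A) :
    μ ≤ (hA.eigenvalues ∘ Tuple.sort hA.eigenvalues) (Fin.last n) := by
  obtain ⟨i, rfl⟩ := hA.spectrum_real_eq_range_eigenvalues ▸ hμ
  calc hA.eigenvalues i
      = (hA.eigenvalues ∘ Tuple.sort hA.eigenvalues) ((Tuple.sort hA.eigenvalues).symm i) := by
        simp
    _ ≤ _ := Tuple.monotone_sort hA.eigenvalues (Fin.le_last _)

lemma sqrt_le_singularValue_zero {n : ℕ} (A : Matrix (Fin (n + 1)) (Fin (n + 1)) ℂ) {μ : ℝ}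
    (hμ : μ ∈ spectrum ℝ (Aᴴ * A)) : √μ ≤ singularValue A 0 :=
  Real.sqrt_le_sqrt ((isHermitian_conjTranspose_mul_self A).le_eigenvalues_sort_last hμ)

lemma conjTranspose_mul_self_smul_allOnes {ι : Type*} [Fintype ι] {c : ℝ}
    (hc : c ^ 2 * Fintype.card ι = 1) :
    ((c : ℂ) • of fun _ _ => (1 : ℂ) : Matrix ι ι ℂ)ᴴ * ((c : ℂ) • of fun _ _ => 1) =
      of fun _ _ => 1 := by
  ext i j
  simp only [smul_of, Complex.coe_smul, mul_apply, conjTranspose_apply, of_apply, Pi.smul_apply,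
    Complex.real_smul, mul_one, RCLike.star_def, Complex.conj_ofReal, sum_const, card_univ,
    nsmul_eq_mul]
  exact_mod_cast (by linear_combination hc : (Fintype.card ι : ℝ) * (c * c) = 1)

lemma fanProduct_allOnes_left {n : ℕ} (B : Matrix (Fin n) (Fin n) ℂ) :
    fanProduct (of fun _ _ => 1) B = of fun i j => if i = j then -B i i else B i j := by
  ext i j
  simp [fanProduct]

noncomputable def orthogonalU : Matrix (Fin 3) (Fin 3) ℂ :=
  (3 : ℂ)⁻¹ • !![2, 1, 2; -2, 2, 1; 1, 2, -2]

lemma conjTranspose_orthogonalU_mul_self : orthogonalUᴴ * orthogonalU = 1 := by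
  ext i j
  fin_cases i <;> fin_cases j <;>
    simp [orthogonalU, mul_apply, Fin.sum_univ_three, one_apply, map_ofNat] <;> norm_num

lemma fanProduct_allOnes_orthogonalU :
    fanProduct (of fun _ _ => 1) orthogonalU = (3 : ℂ)⁻¹ • !![-2, 1, 2; -2, -2, 1; 1, 2, 2] := by
  rw [fanProduct_allOnes_left]
  ext i j
  fin_cases i <;> fin_cases j <;> simp [orthogonalU]

lemma fanProduct_allOnes_orthogonalU_gram_mulVec :
    let M := fanProduct (of fun _ _ => 1) orthogonalU
    (Mᴴ * M) *ᵥ ![1, 1, 0] = ((13 / 9 : ℝ) : ℂ) • ![1, 1, 0] := by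
  rw [fanProduct_allOnes_orthogonalU]
  ext i
  fin_cases i <;>
    simp [mulVec, dotProduct, mul_apply, Fin.sum_univ_three, map_ofNat] <;> norm_num

theorem fanProduct_contraction_lemma_fails :
    ∃ X Y U : Matrix (Fin 3) (Fin 3) ℂ,
      X = (Real.sqrt 3 : ℂ)⁻¹ • Matrix.of (fun _ _ => (1 : ℂ)) ∧ Y = X ∧
      U = (3 : ℂ)⁻¹ • !![(2 : ℂ), 1, 2; -2, 2, 1; 1, 2, -2] ∧
      Uᴴ * U = 1 ∧
      1 < singularValue (fanProduct (Xᴴ * Y) U) ⟨0, by norm_num⟩ := by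
  refine ⟨_, _, orthogonalU, rfl, rfl, rfl, conjTranspose_orthogonalU_mul_self, ?_⟩
  have hXY := conjTranspose_mul_self_smul_allOnes (ι := Fin 3) (c := (√3)⁻¹) (by simp)
  rw [Complex.ofReal_inv] at hXY
  rw [hXY]
  have h13 : (13 / 9 : ℝ) ∈ spectrum ℝ _ :=
    mem_spectrum_real_of_mulVec_eq_smul (by simp) fanProduct_allOnes_orthogonalU_gram_mulVec
  calc (1 : ℝ) < √(13 / 9) := by rw [Real.lt_sqrt zero_le_one]; norm_num
    _ ≤ _ := sqrt_le_singularValue_zero _ h13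
end

section
/- Every contraction in M_n(ℂ) (matrix with operator norm at most 1) is a convex combination of unitary matrices. -/
open Matrix Finset

/-! Take a singular value decomposition `S = U Σ V*`: the columns of `S V` are orthogonal, with
norms the singular values `σ_j ∈ [0, 1]`, and normalising the nonzero ones and extending them to an
orthonormal basis gives `U`. Each `σ_j` is the real part of the unit complex number
`exp (i arccos σ_j)`, so `Σ = (E + E*)/2` for a diagonal unitary `E`, and hence
`S = (U E V* + U E* V*)/2`. -/

section

variable {𝕜 ι : Type*} [RCLike 𝕜] [Fintype ι]

lemma Matrix.inner_toLp_transpose (B : Matrix ι ι 𝕜) (i j : ι) :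
    inner 𝕜 (WithLp.toLp 2 (Bᵀ i) : EuclideanSpace 𝕜 ι) (WithLp.toLp 2 (Bᵀ j)) = (Bᴴ * B) i j := by
  simp [EuclideanSpace.inner_eq_star_dotProduct, mul_apply, dotProduct, mul_comm]

variable [DecidableEq ι]

theorem Matrix.exists_mem_unitaryGroup_eq_mul_diagonal_sqrt {B : Matrix ι ι 𝕜} {d : ι → ℝ}
    (hB : Bᴴ * B = diagonal fun j => (d j : 𝕜)) :
    ∃ U ∈ unitaryGroup ι 𝕜, B = U * diagonal fun j => (√(d j) : 𝕜) := by
  set c : ι → EuclideanSpace 𝕜 ι := fun j => WithLp.toLp 2 (Bᵀ j)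
  have hc : ∀ i j, inner 𝕜 (c i) (c j) = if i = j then (d i : 𝕜) else 0 := by
    intro i j
    rw [inner_toLp_transpose, hB, diagonal_apply]
  have hnorm : ∀ j, √(d j) = ‖c j‖ := by
    intro j
    have : ((‖c j‖ ^ 2 : ℝ) : 𝕜) = d j := by
      rw [RCLike.ofReal_pow, ← inner_self_eq_norm_sq_to_K, hc, if_pos rfl]
    rw [← RCLike.ofReal_inj.mp this, Real.sqrt_sq (norm_nonneg _)]
  set v : ι → EuclideanSpace 𝕜 ι := fun j => (‖c j‖⁻¹ : 𝕜) • c j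
  have hv : Orthonormal 𝕜 ({j | c j ≠ 0}.domRestrict v) := by
    refine ⟨fun ⟨j, hj⟩ => norm_smul_inv_norm hj, ?_⟩
    rintro ⟨i, hi⟩ ⟨j, hj⟩ hij
    simp [v, inner_smul_left, inner_smul_right, hc, Subtype.ext_iff.not.mp hij]
  obtain ⟨b, hb⟩ := hv.exists_orthonormalBasis_extension_of_card_eq (by simp)
  refine ⟨(EuclideanSpace.basisFun ι 𝕜).toBasis.toMatrix b,
    (EuclideanSpace.basisFun ι 𝕜).toMatrix_orthonormalBasis_mem_unitary b, ?_⟩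
  ext k j
  rw [mul_diagonal, Module.Basis.toMatrix_apply, hnorm]
  have hBc : B k j = c j k := rfl
  by_cases hj : c j = 0
  · simp [hBc, hj]
  · have hcj : (‖c j‖ : 𝕜) ≠ 0 := by simpa using hj
    simp [hBc, hb j hj, v]
    field_simp

theorem Matrix.exists_mem_unitaryGroup_eq_mul_diagonal_sqrt_eigenvalues_mul_star
    (A : Matrix ι ι 𝕜) :
    ∃ U ∈ unitaryGroup ι 𝕜, A = U *
      diagonal (fun j => (√((isHermitian_conjTranspose_mul_self A).eigenvalues j) : 𝕜)) *
      star ((isHermitian_conjTranspose_mul_self A).eigenvectorUnitary : Matrix ι ι 𝕜) := by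
  set hA := isHermitian_conjTranspose_mul_self A
  set V : Matrix ι ι 𝕜 := ↑hA.eigenvectorUnitary
  have hAV : (A * V)ᴴ * (A * V) = diagonal fun j => (hA.eigenvalues j : 𝕜) := by
    have := hA.conjStarAlgAut_star_eigenvectorUnitary
    rw [Unitary.conjStarAlgAut_star_apply] at this
    calc (A * V)ᴴ * (A * V) = star V * (Aᴴ * A) * V := by
          simp only [conjTranspose_mul, star_eq_conjTranspose, Matrix.mul_assoc]
      _ = _ := this
  obtain ⟨U, hU, hUA⟩ := exists_mem_unitaryGroup_eq_mul_diagonal_sqrt hAV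
  refine ⟨U, hU, ?_⟩
  rw [← hUA, Matrix.mul_assoc, mem_unitaryGroup_iff.mp hA.eigenvectorUnitary.2, Matrix.mul_one]

theorem Matrix.exists_mem_unitaryGroup_diagonal_ofReal_eq_inv_two_smul_add_star {σ : ι → ℝ}
    (hσ : ∀ j, |σ j| ≤ 1) :
    ∃ E ∈ unitaryGroup ι ℂ, diagonal (fun j => (σ j : ℂ)) = (2⁻¹ : ℂ) • (E + star E) := by
  set e : ι → ℂ := fun j => Complex.exp (Real.arccos (σ j) * Complex.I)
  refine ⟨diagonal e, ?_, ?_⟩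
  · rw [mem_unitaryGroup_iff', star_eq_conjTranspose, diagonal_conjTranspose,
      diagonal_mul_diagonal, ← diagonal_one]
    congr 1
    ext j
    simp [e, ← Complex.exp_conj, ← Complex.exp_add]
  · rw [star_eq_conjTranspose, diagonal_conjTranspose, diagonal_add, ← diagonal_smul]
    congr 1
    ext j
    have := abs_le.mp (hσ j)
    simp [e, Complex.add_conj, Complex.exp_ofReal_mul_I_re]
    rw [← Complex.ofReal_cos, Real.cos_arccos this.1 this.2]

theorem Matrix.exists_mem_unitaryGroup_eq_inv_two_smul_add {S : Matrix ι ι ℂ}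
    (hS : ∀ i, (isHermitian_conjTranspose_mul_self S).eigenvalues i ≤ 1) :
    ∃ W₁ ∈ unitaryGroup ι ℂ, ∃ W₂ ∈ unitaryGroup ι ℂ, S = (2⁻¹ : ℂ) • (W₁ + W₂) := by
  obtain ⟨U, hU, hSVD⟩ := S.exists_mem_unitaryGroup_eq_mul_diagonal_sqrt_eigenvalues_mul_star
  obtain ⟨E, hE, hD⟩ := exists_mem_unitaryGroup_diagonal_ofReal_eq_inv_two_smul_add_star
    (σ := fun j => √((isHermitian_conjTranspose_mul_self S).eigenvalues j))
    fun j => by rw [abs_of_nonneg (Real.sqrt_nonneg _)]; exact Real.sqrt_le_one.mpr (hS j)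
  set V : Matrix ι ι ℂ := ↑(isHermitian_conjTranspose_mul_self S).eigenvectorUnitary
  have hV : star V ∈ unitaryGroup ι ℂ := Unitary.star_mem (SetLike.coe_mem _)
  refine ⟨U * E * star V, mul_mem (mul_mem hU hE) hV,
    U * star E * star V, mul_mem (mul_mem hU (Unitary.star_mem hE)) hV, ?_⟩
  calc S = U * ((2⁻¹ : ℂ) • (E + star E)) * star V := hSVD.trans (congrArg (U * · * star V) hD)
    _ = _ := by simp only [Matrix.mul_smul, Matrix.smul_mul, Matrix.mul_add, Matrix.add_mul]

end

lemma eigenvalues_conjTranspose_mul_self_le_sq_singularValue {n : ℕ} (hn : 0 < n)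
    (S : Matrix (Fin n) (Fin n) ℂ) (i : Fin n) :
    (isHermitian_conjTranspose_mul_self S).eigenvalues i ≤ singularValue S ⟨0, hn⟩ ^ 2 := by
  rw [singularValue, Function.comp_apply,
    Real.sq_sqrt (eigenvalues_conjTranspose_mul_self_nonneg S _)]
  set d := (isHermitian_conjTranspose_mul_self S).eigenvalues
  calc d i = (d ∘ Tuple.sort d) ((Tuple.sort d).symm i) := by simp
    _ ≤ _ := Tuple.monotone_sort d (Fin.le_rev_iff.mpr (Nat.zero_le _))

theorem contraction_convexCombination_unitaries {n : ℕ} (hn : 0 < n)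
    (S : Matrix (Fin n) (Fin n) ℂ) (hS : singularValue S ⟨0, hn⟩ ≤ 1) :
    ∃ (m : ℕ) (t : Fin m → ℝ) (U : Fin m → Matrix (Fin n) (Fin n) ℂ),
      (∀ i, 0 ≤ t i) ∧ (∑ i, t i) = 1 ∧ (∀ i, (U i)ᴴ * U i = 1) ∧
      S = ∑ i, (t i : ℂ) • U i := by
  have hσ : ∀ i, (isHermitian_conjTranspose_mul_self S).eigenvalues i ≤ 1 := fun i =>
    (eigenvalues_conjTranspose_mul_self_le_sq_singularValue hn S i).trans
      (pow_le_one₀ (Real.sqrt_nonneg _) hS)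
  obtain ⟨W₁, hW₁, W₂, hW₂, rfl⟩ := exists_mem_unitaryGroup_eq_inv_two_smul_add hσ
  refine ⟨2, fun _ => 2⁻¹, ![W₁, W₂], fun _ => by norm_num, by norm_num, ?_, ?_⟩
  · intro i
    fin_cases i
    exacts [mem_unitaryGroup_iff'.mp hW₁, mem_unitaryGroup_iff'.mp hW₂]
  · simp [Fin.sum_univ_two, smul_add]
end
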